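/- arXiv:1709.02182 — 3 statements merged into one kernel-verified Lean document; each statement's English description precedes it below -/
import Mathlib

section
/- Let $a<b$, $k>0$, $0<\lambda\le\pi/2$, $n\in\mathbb{N}$, $\epsilon\in J_n=[\,k((b-a)/((n+1)\pi-\lambda))^2,\; k((b-a)/(n\pi+\lambda))^2\,]$, let $f:[a,b]\to\mathbb{R}$ be continuously differentiable, and let $y_\epsilon$ be the solution of $\epsilon y''+ky=f(t)$ on $[a,b]$ with $y'(a)=y'(b)=0$. Then for every $t_0\in[a,b]$, $\left|y_\epsilon(t_0)-\frac{f(t_0)}{k}\right|\le\frac{1}{k\sin\lambda}\left|\int_a^b\sin[\sqrt{k/\epsilon}(b-s)]\,f'(s)\,ds\right|+\frac{1}{k}\left|\int_a^{t_0}\cos[\sqrt{k/\epsilon}(t_0-s)]\,f'(s)\,ds\right|$. -/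
open Real Set

/-- `y` (with first and second derivatives `y'`, `y''` on `[a,b]`) is a twice
continuously differentiable solution of the Neumann problem
`ε y'' + k y = f(t)` on `[a,b]`, `y'(a) = y'(b) = 0`. -/
def IsNeumannSolution (a b k ε : ℝ) (f y y' y'' : ℝ → ℝ) : Prop :=
  (∀ t ∈ Icc a b, HasDerivWithinAt y (y' t) (Icc a b) t) ∧
  (∀ t ∈ Icc a b, HasDerivWithinAt y' (y'' t) (Icc a b) t) ∧
  ContinuousOn y'' (Icc a b) ∧
  (∀ t ∈ Icc a b, ε * y'' t + k * y t = f t) ∧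
  y' a = 0 ∧ y' b = 0

/-!
With `μ = √(k/ε)`, so that `ε μ² = k`, the ODE makes
`sin(μ(c - s)) (f - k y) + ε μ cos(μ(c - s)) y'` a primitive of `sin(μ(c - s)) f'`, and similarly
for the cosine. By the Neumann conditions the sine integral over `[a, b]` is therefore
`sin(μ(b - a)) (k y(a) - f(a))`, while `ε ∈ Jₙ` places `μ(b - a)` in `[nπ + λ, (n + 1)π - λ]`,
where `|sin| ≥ sin λ`. This bounds `k y(a) - f(a)`, and the cosine integral over `[a, t₀]`,
which differs from `f(t₀) - k y(t₀)` by `cos(μ(t₀ - a)) (f(a) - k y(a))`, bounds `k y(t₀) - f(t₀)`.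
-/

theorem integral_eq_sub_of_hasDerivWithinAt_Icc {E : Type*} [NormedAddCommGroup E]
    [NormedSpace ℝ E] [CompleteSpace E] {a b : ℝ} {G g : ℝ → E} (hab : a ≤ b)
    (hG : ∀ t ∈ Icc a b, HasDerivWithinAt G (g t) (Icc a b) t)
    (hg : ContinuousOn g (Icc a b)) : ∫ s in a..b, g s = G b - G a :=
  intervalIntegral.integral_eq_sub_of_hasDerivAt_of_le hab
    (fun t ht => (hG t ht).continuousWithinAt)
    (fun t ht => (hG t (Ioo_subset_Icc_self ht)).hasDerivAt (Icc_mem_nhds ht.1 ht.2))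
    (hg.intervalIntegrable_of_Icc hab)

theorem sin_le_sin_of_le_of_le_pi_sub {lam x : ℝ} (hlam : -(π / 2) ≤ lam) (h₁ : lam ≤ x)
    (h₂ : x ≤ π - lam) : sin lam ≤ sin x := by
  rcases le_total x (π / 2) with h | h
  · exact sin_le_sin_of_le_of_le_pi_div_two hlam h h₁
  · rw [← sin_pi_sub x]
    exact sin_le_sin_of_le_of_le_pi_div_two hlam (by linarith) (by linarith)

theorem sin_le_abs_sin_of_mem_Icc {lam x : ℝ} (n : ℤ) (hlam : -(π / 2) ≤ lam)
    (hx : x ∈ Icc (n * π + lam) ((n + 1) * π - lam)) : sin lam ≤ |sin x| :=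
  calc sin lam ≤ sin (x - n * π) :=
        sin_le_sin_of_le_of_le_pi_sub hlam (by linarith [hx.1]) (by linarith [hx.2])
    _ ≤ |sin x| := by
        rw [sin_sub_int_mul_pi]
        simpa [abs_mul] using le_abs_self ((-1) ^ n * sin x)

theorem sqrt_div_mul_mem_Icc {k ε d p q : ℝ} (hk : 0 < k) (hd : 0 < d) (hp : 0 < p) (hq : 0 < q)
    (hε : ε ∈ Icc (k * (d / q) ^ 2) (k * (d / p) ^ 2)) : √(k / ε) * d ∈ Icc p q := by
  have hε₀ : 0 < ε := lt_of_lt_of_le (by positivity) hε.1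
  have hsqrt : √(k / ε) * d = √(k / ε * d ^ 2) := by
    rw [sqrt_mul' _ (sq_nonneg d), sqrt_sq hd.le]
  obtain ⟨hlow, hup⟩ := hε
  rw [div_pow, mul_div_assoc', div_le_iff₀ (by positivity)] at hlow
  rw [div_pow, mul_div_assoc', le_div_iff₀ (by positivity)] at hup
  rw [hsqrt, mem_Icc, le_sqrt' hp, sqrt_le_left hq.le, div_mul_eq_mul_div, le_div_iff₀ hε₀,
    div_le_iff₀ hε₀]
  constructor <;> linarith

namespace IsNeumannSolution

variable {a b k ε μ : ℝ} {f f' y y' y'' : ℝ → ℝ}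

theorem hasDerivWithinAt_sin_primitive (hy : IsNeumannSolution a b k ε f y y' y'')
    (hμ : ε * μ ^ 2 = k) (hf : ∀ t ∈ Icc a b, HasDerivWithinAt f (f' t) (Icc a b) t) (c : ℝ)
    {t : ℝ} (ht : t ∈ Icc a b) :
    HasDerivWithinAt
      (fun s => sin (μ * (c - s)) * (f s - k * y s) + ε * μ * cos (μ * (c - s)) * y' s)
      (sin (μ * (c - t)) * f' t) (Icc a b) t := by
  obtain ⟨hy', hy'', -, hode, -⟩ := hy
  have hu : HasDerivAt (fun s => μ * (c - s)) (μ * -1) t :=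
    ((hasDerivAt_id t).const_sub c).const_mul μ
  refine (((hu.sin.hasDerivWithinAt.mul ((hf t ht).sub ((hy' t ht).const_mul k))).add
    ((hu.cos.hasDerivWithinAt.const_mul (ε * μ)).mul (hy'' t ht)))).congr_deriv ?_
  simp only [Pi.sub_apply]
  linear_combination (μ * cos (μ * (c - t))) * hode t ht + (sin (μ * (c - t)) * y' t) * hμ

theorem hasDerivWithinAt_cos_primitive (hy : IsNeumannSolution a b k ε f y y' y'')
    (hμ : ε * μ ^ 2 = k) (hf : ∀ t ∈ Icc a b, HasDerivWithinAt f (f' t) (Icc a b) t) (c : ℝ)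
    {t : ℝ} (ht : t ∈ Icc a b) :
    HasDerivWithinAt
      (fun s => cos (μ * (c - s)) * (f s - k * y s) - ε * μ * sin (μ * (c - s)) * y' s)
      (cos (μ * (c - t)) * f' t) (Icc a b) t := by
  obtain ⟨hy', hy'', -, hode, -⟩ := hy
  have hu : HasDerivAt (fun s => μ * (c - s)) (μ * -1) t :=
    ((hasDerivAt_id t).const_sub c).const_mul μ
  refine (((hu.cos.hasDerivWithinAt.mul ((hf t ht).sub ((hy' t ht).const_mul k))).sub
    ((hu.sin.hasDerivWithinAt.const_mul (ε * μ)).mul (hy'' t ht)))).congr_deriv ?_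
  simp only [Pi.sub_apply]
  linear_combination (-(μ * sin (μ * (c - t)))) * hode t ht + (cos (μ * (c - t)) * y' t) * hμ

theorem integral_sin_mul_deriv (hy : IsNeumannSolution a b k ε f y y' y'') (hμ : ε * μ ^ 2 = k)
    (hf : ∀ t ∈ Icc a b, HasDerivWithinAt f (f' t) (Icc a b) t)
    (hf' : ContinuousOn f' (Icc a b)) (hab : a ≤ b) :
    ∫ s in a..b, sin (μ * (b - s)) * f' s = sin (μ * (b - a)) * (k * y a - f a) := by
  rw [integral_eq_sub_of_hasDerivWithinAt_Icc hab
    (fun t ht => hy.hasDerivWithinAt_sin_primitive hμ hf b ht) (by fun_prop)]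
  obtain ⟨-, -, -, -, hya, hyb⟩ := hy
  simp only [sub_self, mul_zero, sin_zero, cos_zero, hya, hyb]
  ring

theorem integral_cos_mul_deriv (hy : IsNeumannSolution a b k ε f y y' y'') (hμ : ε * μ ^ 2 = k)
    (hf : ∀ t ∈ Icc a b, HasDerivWithinAt f (f' t) (Icc a b) t)
    (hf' : ContinuousOn f' (Icc a b)) {t₀ : ℝ} (ht₀ : t₀ ∈ Icc a b) :
    ∫ s in a..t₀, cos (μ * (t₀ - s)) * f' s =
      f t₀ - k * y t₀ - cos (μ * (t₀ - a)) * (f a - k * y a) := by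
  have hsub : Icc a t₀ ⊆ Icc a b := Icc_subset_Icc_right ht₀.2
  rw [integral_eq_sub_of_hasDerivWithinAt_Icc ht₀.1
    (fun t ht => (hy.hasDerivWithinAt_cos_primitive hμ hf t₀ (hsub ht)).mono hsub)
    ((by fun_prop : ContinuousOn (fun s => cos (μ * (t₀ - s)) * f' s) (Icc a b)).mono hsub)]
  obtain ⟨-, -, -, -, hya, -⟩ := hy
  simp only [sub_self, mul_zero, sin_zero, cos_zero, hya]
  ring

end IsNeumannSolution

/-- for `ε ∈ Jₙ`, continuously differentiable `f` on `[a,b]`, and `y_ε` the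
solution of the Neumann problem `ε y'' + k y = f(t)`, `y'(a) = y'(b) = 0`, for every
`t₀ ∈ [a,b]`:
`|y_ε(t₀) - f(t₀)/k| ≤ (1/(k sin λ)) |∫_a^b sin(√(k/ε)(b-s)) f'(s) ds|
                       + (1/k) |∫_a^{t₀} cos(√(k/ε)(t₀-s)) f'(s) ds|`. -/
theorem stmt_8 (a b k lam ε : ℝ) (n : ℕ) (f f' y y' y'' : ℝ → ℝ)
    (hab : a < b) (hk : 0 < k) (hlam : 0 < lam) (hlam' : lam ≤ π / 2)
    (hε : ε ∈ Icc (k * ((b - a) / ((n + 1) * π - lam)) ^ 2)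
      (k * ((b - a) / (n * π + lam)) ^ 2))
    (hf : ∀ t ∈ Icc a b, HasDerivWithinAt f (f' t) (Icc a b) t)
    (hf' : ContinuousOn f' (Icc a b))
    (hy : IsNeumannSolution a b k ε f y y' y'') :
    ∀ t₀ ∈ Icc a b,
      |y t₀ - f t₀ / k| ≤
        (1 / (k * Real.sin lam)) *
            |∫ s in a..b, Real.sin (Real.sqrt (k / ε) * (b - s)) * f' s| +
          (1 / k) * |∫ s in a..t₀, Real.cos (Real.sqrt (k / ε) * (t₀ - s)) * f' s| := by
  intro t₀ ht₀
  have hd : 0 < b - a := sub_pos.2 hab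
  have hq : 0 < (n + 1) * π - lam := by nlinarith [pi_pos, (n.cast_nonneg : (0 : ℝ) ≤ n)]
  have hε₀ : 0 < ε := (mul_pos hk (pow_pos (div_pos hd hq) 2)).trans_le hε.1
  set μ := √(k / ε)
  have hμ : ε * μ ^ 2 = k := by rw [sq_sqrt (by positivity)]; field_simp
  have hsin_lam : 0 < sin lam := sin_pos_of_pos_of_lt_pi hlam (by linarith [pi_pos])
  have hsin : sin lam ≤ |sin (μ * (b - a))| :=
    sin_le_abs_sin_of_mem_Icc n (by linarith [pi_pos])
      (by exact_mod_cast sqrt_div_mul_mem_Icc hk hd (by positivity) hq hε)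
  rw [hy.integral_sin_mul_deriv hμ hf hf' hab.le, hy.integral_cos_mul_deriv hμ hf hf' ht₀]
  set A := k * y a - f a
  set c := cos (μ * (t₀ - a))
  set I := f t₀ - k * y t₀ - c * (f a - k * y a)
  have hA : |A| ≤ |sin (μ * (b - a)) * A| / sin lam := by
    rw [le_div_iff₀ hsin_lam, abs_mul, mul_comm]
    exact mul_le_mul_of_nonneg_right hsin (abs_nonneg A)
  have hkey : k * (y t₀ - f t₀ / k) = c * A - I := by
    simp only [A, I]
    field_simp
    ring
  calc |y t₀ - f t₀ / k| = |c * A - I| / k := by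
        rw [← hkey, abs_mul, abs_of_pos hk, mul_div_cancel_left₀ _ hk.ne']
    _ ≤ (|c| * |A| + |I|) / k := by
        rw [← abs_mul]
        gcongr
        exact abs_sub _ _
    _ ≤ (|sin (μ * (b - a)) * A| / sin lam + |I|) / k := by
        gcongr
        exact (mul_le_of_le_one_left (abs_nonneg A) (abs_cos_le_one _)).trans hA
    _ = _ := by field_simp
end

section
/- Let $a<b$, $k>0$, $\epsilon>0$, and let $f:[a,b]\to\mathbb{R}$ be three times continuously differentiable with $\mu_2=\sup_{t\in[a,b]}|f'''(t)|$. Then $\left|\int_a^b\sin[\sqrt{k/\epsilon}(b-s)]\,f'(s)\,ds\right|\le\sqrt{\epsilon/k}\,\Big\{|f'(a)|+|f'(b)|+\sqrt{\epsilon/k}\,\big(|f''(a)|+\mu_2(b-a)\big)\Big\}$. -/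
open Real Set

/-!
Write `ω = √(k/ε)`, so that `√(ε/k) = 1/ω`. Integrating by parts against the antiderivative
`cos (ω (b - s)) / ω` of `sin (ω (b - s))`, and then against the antiderivative
`-sin (ω (b - s)) / ω` of `cos (ω (b - s))`, moves two derivatives onto `f'` and gains a factor
`1/ω` each time. The boundary terms are bounded using `|sin|, |cos| ≤ 1` (the cosine term at `s = b`
is exactly `f'(b)/ω`, the sine term there vanishes), and the remaining integral
`ω⁻² ∫ sin (ω (b - s)) f'''(s) ds` by `ω⁻² μ₂ (b - a)`.
-/

open MeasureTheory
open scoped Interval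

section OscillatoryIntegral

variable {ω a b : ℝ} {u u' u'' : ℝ → ℝ}

theorem hasDerivAt_cos_mul_sub_div (hω : ω ≠ 0) (s : ℝ) :
    HasDerivAt (fun x => cos (ω * (b - x)) / ω) (sin (ω * (b - s))) s :=
  (((hasDerivAt_id' s).const_sub b).const_mul ω).cos.div_const ω |>.congr_deriv <| by
    field_simp

theorem hasDerivAt_neg_sin_mul_sub_div (hω : ω ≠ 0) (s : ℝ) :
    HasDerivAt (fun x => -(sin (ω * (b - x)) / ω)) (cos (ω * (b - s))) s :=
  (((hasDerivAt_id' s).const_sub b).const_mul ω).sin.div_const ω |>.neg |>.congr_deriv <| by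
    field_simp

theorem integral_sin_mul_sub_mul_by_parts (hω : ω ≠ 0)
    (hu : ∀ x ∈ uIcc a b, HasDerivWithinAt u (u' x) (uIcc a b) x)
    (hu' : IntervalIntegrable u' volume a b) :
    ∫ s in a..b, sin (ω * (b - s)) * u s =
      (u b - cos (ω * (b - a)) * u a - ∫ s in a..b, cos (ω * (b - s)) * u' s) / ω := by
  have ibp := intervalIntegral.integral_mul_deriv_eq_deriv_mul_of_hasDerivWithinAt hu
    (fun x _ => (hasDerivAt_cos_mul_sub_div (b := b) hω x).hasDerivWithinAt) hu'
    ((by fun_prop : Continuous fun s => sin (ω * (b - s))).intervalIntegrable a b)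
  simp only [mul_comm (sin _), mul_comm (cos _), ibp, sub_self, mul_zero, cos_zero,
    mul_div_assoc', intervalIntegral.integral_div]
  ring

theorem integral_cos_mul_sub_mul_by_parts (hω : ω ≠ 0)
    (hu : ∀ x ∈ uIcc a b, HasDerivWithinAt u (u' x) (uIcc a b) x)
    (hu' : IntervalIntegrable u' volume a b) :
    ∫ s in a..b, cos (ω * (b - s)) * u s =
      (sin (ω * (b - a)) * u a + ∫ s in a..b, sin (ω * (b - s)) * u' s) / ω := by
  have ibp := intervalIntegral.integral_mul_deriv_eq_deriv_mul_of_hasDerivWithinAt hu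
    (fun x _ => (hasDerivAt_neg_sin_mul_sub_div (b := b) hω x).hasDerivWithinAt) hu'
    ((by fun_prop : Continuous fun s => cos (ω * (b - s))).intervalIntegrable a b)
  simp only [mul_comm (sin _), mul_comm (cos _), ibp, sub_self, mul_zero, sin_zero,
    mul_neg, mul_div_assoc', intervalIntegral.integral_neg, intervalIntegral.integral_div]
  ring

theorem integral_sin_mul_sub_mul_by_parts_twice (hω : ω ≠ 0)
    (hu : ∀ x ∈ uIcc a b, HasDerivWithinAt u (u' x) (uIcc a b) x)
    (hu' : ∀ x ∈ uIcc a b, HasDerivWithinAt u' (u'' x) (uIcc a b) x)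
    (hu'' : IntervalIntegrable u'' volume a b) :
    ∫ s in a..b, sin (ω * (b - s)) * u s =
      (u b - cos (ω * (b - a)) * u a) / ω -
        (sin (ω * (b - a)) * u' a + ∫ s in a..b, sin (ω * (b - s)) * u'' s) / ω ^ 2 := by
  have hu'_int : IntervalIntegrable u' volume a b :=
    ContinuousOn.intervalIntegrable fun x hx => (hu' x hx).continuousWithinAt
  rw [integral_sin_mul_sub_mul_by_parts hω hu hu'_int,
    integral_cos_mul_sub_mul_by_parts hω hu' hu'']
  field_simp

theorem abs_integral_sin_mul_sub_mul_le {M : ℝ} (hω : 0 < ω)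
    (hu : ∀ x ∈ uIcc a b, HasDerivWithinAt u (u' x) (uIcc a b) x)
    (hu' : ∀ x ∈ uIcc a b, HasDerivWithinAt u' (u'' x) (uIcc a b) x)
    (hu'' : IntervalIntegrable u'' volume a b) (hM : ∀ x ∈ Ι a b, |u'' x| ≤ M) :
    |∫ s in a..b, sin (ω * (b - s)) * u s| ≤
      (|u a| + |u b|) / ω + (|u' a| + M * |b - a|) / ω ^ 2 := by
  have remainder : |∫ s in a..b, sin (ω * (b - s)) * u'' s| ≤ M * |b - a| := by
    rw [← norm_eq_abs]
    refine intervalIntegral.norm_integral_le_of_norm_le_const fun x hx => ?_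
    rw [norm_eq_abs, abs_mul]
    exact (mul_le_of_le_one_left (abs_nonneg _) (abs_sin_le_one _)).trans (hM x hx)
  have boundary : |u b - cos (ω * (b - a)) * u a| ≤ |u a| + |u b| := by
    calc |u b - cos (ω * (b - a)) * u a| ≤ |u b| + |cos (ω * (b - a))| * |u a| := by
          rw [← abs_mul]; exact abs_sub _ _
      _ ≤ |u a| + |u b| := by
          linarith [mul_le_of_le_one_left (abs_nonneg (u a)) (abs_cos_le_one (ω * (b - a)))]
  have boundary' : |sin (ω * (b - a)) * u' a| ≤ |u' a| := by
    rw [abs_mul]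
    exact mul_le_of_le_one_left (abs_nonneg _) (abs_sin_le_one _)
  rw [integral_sin_mul_sub_mul_by_parts_twice hω.ne' hu hu' hu'']
  calc _ ≤ |u b - cos (ω * (b - a)) * u a| / ω +
        (|sin (ω * (b - a)) * u' a| + |∫ s in a..b, sin (ω * (b - s)) * u'' s|) / ω ^ 2 := by
        refine (abs_sub _ _).trans ?_
        rw [abs_div, abs_div, abs_of_pos hω, abs_of_pos (pow_pos hω 2)]
        gcongr
        exact abs_add_le _ _
    _ ≤ _ := by gcongr

end OscillatoryIntegral

theorem stmt_9_general (a b k ε : ℝ) (f' f'' f''' : ℝ → ℝ)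
    (hab : a < b) (hk : 0 < k) (hε : 0 < ε)
    (hf' : ∀ t ∈ Icc a b, HasDerivWithinAt f' (f'' t) (Icc a b) t)
    (hf'' : ∀ t ∈ Icc a b, HasDerivWithinAt f'' (f''' t) (Icc a b) t)
    (hf''' : ContinuousOn f''' (Icc a b)) :
    |∫ s in a..b, Real.sin (Real.sqrt (k / ε) * (b - s)) * f' s| ≤
      Real.sqrt (ε / k) *
        (|f' a| + |f' b| +
          Real.sqrt (ε / k) *
            (|f'' a| + sSup ((fun t => |f''' t|) '' Icc a b) * (b - a))) := by
  set M := sSup ((fun t => |f''' t|) '' Icc a b)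
  have hM : ∀ x ∈ Ι a b, |f''' x| ≤ M := fun x hx =>
    le_csSup (isCompact_Icc.bddAbove_image hf'''.abs)
      (mem_image_of_mem _ (Ioc_subset_Icc_self (uIoc_of_le hab.le ▸ hx)))
  have hsqrt : √(ε / k) = (√(k / ε))⁻¹ := by rw [← sqrt_inv, inv_div]
  rw [← uIcc_of_le hab.le] at hf' hf'' hf'''
  refine (abs_integral_sin_mul_sub_mul_le (sqrt_pos.2 (div_pos hk hε)) hf' hf''
    hf'''.intervalIntegrable hM).trans_eq ?_
  rw [hsqrt, abs_of_pos (sub_pos.2 hab)]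
  ring

/-- for a three times continuously differentiable `f` on `[a,b]`, with
`μ₂ = sup_{t ∈ [a,b]} |f'''(t)|`,
`|∫_a^b sin(√(k/ε)(b-s)) f'(s) ds|
   ≤ √(ε/k) { |f'(a)| + |f'(b)| + √(ε/k) (|f''(a)| + μ₂ (b-a)) }`. -/
theorem stmt_9 (a b k ε : ℝ) (f f' f'' f''' : ℝ → ℝ)
    (hab : a < b) (hk : 0 < k) (hε : 0 < ε)
    (hf : ∀ t ∈ Icc a b, HasDerivWithinAt f (f' t) (Icc a b) t)
    (hf' : ∀ t ∈ Icc a b, HasDerivWithinAt f' (f'' t) (Icc a b) t)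
    (hf'' : ∀ t ∈ Icc a b, HasDerivWithinAt f'' (f''' t) (Icc a b) t)
    (hf''' : ContinuousOn f''' (Icc a b)) :
    |∫ s in a..b, Real.sin (Real.sqrt (k / ε) * (b - s)) * f' s| ≤
      Real.sqrt (ε / k) *
        (|f' a| + |f' b| +
          Real.sqrt (ε / k) *
            (|f'' a| + sSup ((fun t => |f''' t|) '' Icc a b) * (b - a))) :=
  stmt_9_general a b k ε f' f'' f''' hab hk hε hf' hf'' hf'''
end

section
/- Let $a<b$, $k>0$, $\epsilon>0$, let $f:[a,b]\to\mathbb{R}$ be three times continuously differentiable with $\mu_1=\sup_{t\in[a,b]}|f''(t)|$ and $\mu_2=\sup_{t\in[a,b]}|f'''(t)|$, and let $t_0\in[a,b]$. Then $\left|\int_a^{t_0}\cos[\sqrt{k/\epsilon}(t_0-s)]\,f'(s)\,ds\right|\le\sqrt{\epsilon/k}\,\Big\{|f'(a)|+\sqrt{\epsilon/k}\,\big(\mu_1+|f''(a)|+\mu_2(b-a)\big)\Big\}$. -/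
open Real Set

/-!
Integrate by parts twice against the kernel `cos (ω (t₀ - s))`, `ω = √(k/ε)`: each integration
trades the oscillating factor for its antiderivative, which gains a factor `1/ω = √(ε/k)`. The
boundary terms and the remaining integral of `f'''` are then bounded by `|f'(a)|`,
`μ₁ + |f''(a)|` and `μ₂ (b - a)`.
-/

namespace OscillatoryIntegral

variable {u u' u'' : ℝ → ℝ} {a t ω M : ℝ}

theorem hasDerivAt_const_mul_const_sub (ω t x : ℝ) :
    HasDerivAt (fun s => ω * (t - s)) (-ω) x := by
  simpa using ((hasDerivAt_id x).const_sub t).const_mul ω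

theorem integral_cos_mul_eq (hω : ω ≠ 0)
    (hu : ∀ x ∈ uIcc a t, HasDerivWithinAt u (u' x) (uIcc a t) x)
    (hu' : IntervalIntegrable u' MeasureTheory.volume a t) :
    ∫ s in a..t, cos (ω * (t - s)) * u s =
      (sin (ω * (t - a)) * u a + ∫ s in a..t, sin (ω * (t - s)) * u' s) / ω := by
  have hv : ∀ x, HasDerivAt (fun s => -sin (ω * (t - s)) / ω) (cos (ω * (t - x))) x := fun x =>
    ((hasDerivAt_const_mul_const_sub ω t x).sin.neg.div_const ω).congr_deriv (by field_simp)
  have hv' : IntervalIntegrable (fun s => cos (ω * (t - s))) MeasureTheory.volume a t :=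
    (by fun_prop : Continuous fun s => cos (ω * (t - s))).intervalIntegrable _ _
  simp_rw [mul_comm (cos _)]
  rw [intervalIntegral.integral_mul_deriv_eq_deriv_mul_of_hasDerivWithinAt hu
    (fun x _ => (hv x).hasDerivWithinAt) hu' hv']
  simp_rw [mul_div_assoc', intervalIntegral.integral_div, mul_neg, intervalIntegral.integral_neg]
  simp only [sub_self, mul_zero, sin_zero, neg_zero, zero_div, mul_comm (u' _)]
  ring

theorem integral_sin_mul_eq (hω : ω ≠ 0)
    (hu : ∀ x ∈ uIcc a t, HasDerivWithinAt u (u' x) (uIcc a t) x)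
    (hu' : IntervalIntegrable u' MeasureTheory.volume a t) :
    ∫ s in a..t, sin (ω * (t - s)) * u s =
      (u t - cos (ω * (t - a)) * u a - ∫ s in a..t, cos (ω * (t - s)) * u' s) / ω := by
  have hv : ∀ x, HasDerivAt (fun s => cos (ω * (t - s)) / ω) (sin (ω * (t - x))) x := fun x =>
    ((hasDerivAt_const_mul_const_sub ω t x).cos.div_const ω).congr_deriv (by field_simp)
  have hv' : IntervalIntegrable (fun s => sin (ω * (t - s))) MeasureTheory.volume a t :=
    (by fun_prop : Continuous fun s => sin (ω * (t - s))).intervalIntegrable _ _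
  simp_rw [mul_comm (sin _)]
  rw [intervalIntegral.integral_mul_deriv_eq_deriv_mul_of_hasDerivWithinAt hu
    (fun x _ => (hv x).hasDerivWithinAt) hu' hv']
  simp_rw [mul_div_assoc', intervalIntegral.integral_div]
  simp only [sub_self, mul_zero, cos_zero, mul_comm (u' _)]
  ring

theorem abs_integral_cos_mul_le {g : ℝ → ℝ} (hg : ∀ s ∈ uIoc a t, |g s| ≤ M) :
    |∫ s in a..t, cos (ω * (t - s)) * g s| ≤ M * |t - a| := by
  refine (norm_eq_abs _).symm.trans_le
    (intervalIntegral.norm_integral_le_of_norm_le_const fun s hs => ?_)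
  rw [norm_mul, norm_eq_abs, norm_eq_abs]
  exact (mul_le_of_le_one_left (abs_nonneg _) (abs_cos_le_one _)).trans (hg s hs)

theorem abs_integral_cos_mul_le_of_hasDerivWithinAt (hω : 0 < ω)
    (hu : ∀ x ∈ uIcc a t, HasDerivWithinAt u (u' x) (uIcc a t) x)
    (hu' : ∀ x ∈ uIcc a t, HasDerivWithinAt u' (u'' x) (uIcc a t) x)
    (hu'' : IntervalIntegrable u'' MeasureTheory.volume a t)
    (hM : ∀ s ∈ uIoc a t, |u'' s| ≤ M) :
    |∫ s in a..t, cos (ω * (t - s)) * u s| ≤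
      ω⁻¹ * (|u a| + ω⁻¹ * (|u' t| + |u' a| + M * |t - a|)) := by
  have hu'c : ContinuousOn u' (uIcc a t) := fun x hx => (hu' x hx).continuousWithinAt
  have habs_inv_mul : ∀ x, |ω⁻¹ * x| = ω⁻¹ * |x| := fun x => by
    rw [abs_mul, abs_inv, abs_of_pos hω]
  have hboundary : |sin (ω * (t - a)) * u a| ≤ |u a| := by
    rw [abs_mul]
    exact mul_le_of_le_one_left (abs_nonneg _) (abs_sin_le_one _)
  have hboundary' : |cos (ω * (t - a)) * u' a| ≤ |u' a| := by
    rw [abs_mul]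
    exact mul_le_of_le_one_left (abs_nonneg _) (abs_cos_le_one _)
  rw [integral_cos_mul_eq hω.ne' hu hu'c.intervalIntegrable,
    integral_sin_mul_eq hω.ne' hu' hu'', div_eq_inv_mul, habs_inv_mul, div_eq_inv_mul]
  gcongr
  refine (abs_add_le _ _).trans (add_le_add hboundary ?_)
  rw [habs_inv_mul]
  gcongr
  exact (abs_sub _ _).trans (add_le_add ((abs_sub _ _).trans (by gcongr))
    (abs_integral_cos_mul_le hM))

end OscillatoryIntegral

theorem abs_le_sSup_image_abs {s : Set ℝ} {g : ℝ → ℝ} (hs : IsCompact s) (hg : ContinuousOn g s)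
    {x : ℝ} (hx : x ∈ s) : |g x| ≤ sSup ((fun t => |g t|) '' s) :=
  le_csSup (hs.bddAbove_image hg.abs) (mem_image_of_mem _ hx)

theorem stmt_10_general (a b k ε t₀ : ℝ) (f' f'' f''' : ℝ → ℝ)
    (hk : 0 < k) (hε : 0 < ε)
    (hf' : ∀ t ∈ Icc a b, HasDerivWithinAt f' (f'' t) (Icc a b) t)
    (hf'' : ∀ t ∈ Icc a b, HasDerivWithinAt f'' (f''' t) (Icc a b) t)
    (hf''' : ContinuousOn f''' (Icc a b)) (ht₀ : t₀ ∈ Icc a b) :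
    |∫ s in a..t₀, Real.cos (Real.sqrt (k / ε) * (t₀ - s)) * f' s| ≤
      Real.sqrt (ε / k) *
        (|f' a| +
          Real.sqrt (ε / k) *
            (sSup ((fun t => |f'' t|) '' Icc a b) + |f'' a| +
              sSup ((fun t => |f''' t|) '' Icc a b) * (b - a))) := by
  have hω : 0 < √(k / ε) := sqrt_pos.2 (div_pos hk hε)
  have hsub : uIcc a t₀ ⊆ Icc a b := by
    rw [uIcc_of_le ht₀.1]
    exact Icc_subset_Icc_right ht₀.2
  have hf''c : ContinuousOn f'' (Icc a b) := fun t ht => (hf'' t ht).continuousWithinAt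
  have hbound := OscillatoryIntegral.abs_integral_cos_mul_le_of_hasDerivWithinAt hω
    (fun x hx => (hf' x (hsub hx)).mono hsub) (fun x hx => (hf'' x (hsub hx)).mono hsub)
    (hf'''.mono hsub).intervalIntegrable
    fun s hs => abs_le_sSup_image_abs isCompact_Icc hf''' (hsub (uIoc_subset_uIcc hs))
  rw [← sqrt_inv, inv_div] at hbound
  refine hbound.trans ?_
  have hμ₂ : 0 ≤ sSup ((fun t => |f''' t|) '' Icc a b) :=
    (abs_nonneg _).trans (abs_le_sSup_image_abs isCompact_Icc hf''' ht₀)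
  gcongr
  · exact abs_le_sSup_image_abs isCompact_Icc hf''c ht₀
  · rw [abs_of_nonneg (sub_nonneg.2 ht₀.1)]
    exact sub_le_sub_right ht₀.2 a

/-- for a three times continuously differentiable `f` on `[a,b]`, with
`μ₁ = sup_{t ∈ [a,b]} |f''(t)|` and `μ₂ = sup_{t ∈ [a,b]} |f'''(t)|`, and `t₀ ∈ [a,b]`,
`|∫_a^{t₀} cos(√(k/ε)(t₀-s)) f'(s) ds|
   ≤ √(ε/k) { |f'(a)| + √(ε/k) (μ₁ + |f''(a)| + μ₂ (b-a)) }`. -/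
theorem stmt_10 (a b k ε t₀ : ℝ) (f f' f'' f''' : ℝ → ℝ)
    (hab : a < b) (hk : 0 < k) (hε : 0 < ε)
    (hf : ∀ t ∈ Icc a b, HasDerivWithinAt f (f' t) (Icc a b) t)
    (hf' : ∀ t ∈ Icc a b, HasDerivWithinAt f' (f'' t) (Icc a b) t)
    (hf'' : ∀ t ∈ Icc a b, HasDerivWithinAt f'' (f''' t) (Icc a b) t)
    (hf''' : ContinuousOn f''' (Icc a b)) (ht₀ : t₀ ∈ Icc a b) :
    |∫ s in a..t₀, Real.cos (Real.sqrt (k / ε) * (t₀ - s)) * f' s| ≤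
      Real.sqrt (ε / k) *
        (|f' a| +
          Real.sqrt (ε / k) *
            (sSup ((fun t => |f'' t|) '' Icc a b) + |f'' a| +
              sSup ((fun t => |f''' t|) '' Icc a b) * (b - a))) :=
  stmt_10_general a b k ε t₀ f' f'' f''' hk hε hf' hf'' hf''' ht₀
end
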